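/- Proposition 2 (ISS of deep GRUs): consider the deep GRU with M layers and suppose that for every layer i ∈ {1,…,M} it holds that ‖U_r^i‖_∞ · σ(‖[W_f^i U_f^i b_f^i]‖_∞) < 1. Fix λ̌^i ≥ 1 for each layer. Then the deep GRU is Input-to-State Stable: there exist a class-KL function β and class-K∞ functions γ_u, γ_b such that for every collection of layer biases b_r = (b_r^1,…,b_r^M), every initial state x̄ = (x̄^1,…,x̄^M) with ‖x̄^i‖_∞ ≤ λ̌^i for all i, every input sequence u with ‖u(t)‖_∞ ≤ 1 for all t, and every k ≥ 0, the concatenated state trajectory satisfies ‖x(k)‖_∞ ≤ β(‖x̄‖_∞, k) + γ_u(sup_t ‖u(t)‖_∞) + γ_b(‖b_r‖_∞). -/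

import Mathlib

open Real Filter

/-- The sigmoid activation function. -/
noncomputable def sigmoid (s : ℝ) : ℝ := 1 / (1 + Real.exp (-s))

/-- Induced infinity norm of a matrix (maximum absolute row sum). -/
noncomputable def matNorm {n m : ℕ} (A : Matrix (Fin n) (Fin m) ℝ) : ℝ :=
  ⨆ i, ∑ j, |A i j|

/-- Infinity norm of the horizontal concatenation `[A B c]`
(maximum absolute row sum of the concatenated matrix). -/
noncomputable def catNorm {n m p : ℕ} (A : Matrix (Fin n) (Fin m) ℝ)
    (B : Matrix (Fin n) (Fin p) ℝ) (c : Fin n → ℝ) : ℝ :=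
  ⨆ i, (∑ j, |A i j| + ∑ j, |B i j| + |c i|)

/-- One step of the single-layer GRU:
`x⁺ = z ∘ x + (1 - z) ∘ tanh(W_r u + U_r (f ∘ x) + b_r)`,
`z = σ(W_z u + U_z x + b_z)`, `f = σ(W_f u + U_f x + b_f)`. -/
noncomputable def gruStep {nu nx : ℕ}
    (Wz Wf Wr : Matrix (Fin nx) (Fin nu) ℝ)
    (Uz Uf Ur : Matrix (Fin nx) (Fin nx) ℝ)
    (bz bf br : Fin nx → ℝ)
    (u : Fin nu → ℝ) (x : Fin nx → ℝ) : Fin nx → ℝ :=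
  let z : Fin nx → ℝ := fun i => _root_.sigmoid ((Wz.mulVec u + Uz.mulVec x + bz) i)
  let f : Fin nx → ℝ := fun i => _root_.sigmoid ((Wf.mulVec u + Uf.mulVec x + bf) i)
  let r : Fin nx → ℝ := fun i => Real.tanh ((Wr.mulVec u + Ur.mulVec (f * x) + br) i)
  fun j => z j * x j + (1 - z j) * r j

/-- A function `γ : [0,∞) → [0,∞)` is of class K∞ if it is continuous,
strictly increasing, unbounded and `γ 0 = 0`. -/
def IsKInf (γ : ℝ → ℝ) : Prop :=
  ContinuousOn γ (Set.Ici 0) ∧ StrictMonoOn γ (Set.Ici 0) ∧ γ 0 = 0 ∧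
    ∀ M : ℝ, ∃ s, 0 ≤ s ∧ M < γ s

/-- A function `β : [0,∞) × ℕ → [0,∞)` is of class KL if `β (·, k)` is of class K∞
for each `k`, `β (s, ·)` is nonincreasing, and `β (s, k) → 0` as `k → ∞`. -/
def IsKL (β : ℝ → ℕ → ℝ) : Prop :=
  (∀ k : ℕ, IsKInf fun s => β s k) ∧
    (∀ s : ℝ, 0 ≤ s → ∀ k l : ℕ, k ≤ l → β s l ≤ β s k) ∧
    (∀ s : ℝ, 0 ≤ s → Filter.Tendsto (fun k : ℕ => β s k) Filter.atTop (nhds 0))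

/-- Input dimension of layer `i` of a deep GRU: the first layer is fed by the
external input (dimension `nu`), layer `i+1` is fed by the state of layer `i`. -/
def inDim (nu : ℕ) (n : ℕ → ℕ) : ℕ → ℕ
  | 0 => nu
  | i + 1 => n i

/-!
Each layer update `z ∘ x + (1 - z) ∘ tanh(…)` is a convex combination with `0 < z < 1` and
`|tanh| < 1`. Hence the ball of radius `Λ ≥ 1` is invariant, and while the state stays in it the
update gate is bounded by `σ(‖[W_z U_z b_z]‖ Λ) < 1`, so the excess `‖x‖ - 1` decays
geometrically: after a finite transient every layer lies in the ball of radius `1 + ε`. On that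
ball the hypothesis, which survives with a margin `ε` by continuity, makes each layer a
contraction in its own state, driven linearly by its input and its bias `b_r`. The cascade of
layers, layer `i + 1` being fed by the new state of layer `i`, contracts in the weighted norm
`max_i δ^i ‖x^i‖` for small `δ`, giving exponential decay plus linear gains. Initial states of
norm at most one lie in the contraction region from the start; larger ones pay for the transient
through the constant in `β`.
-/

open Matrix

theorem sigmoid_eq_real_sigmoid : _root_.sigmoid = Real.sigmoid := by
  funext s
  rw [_root_.sigmoid, Real.sigmoid, one_div]

theorem Real.sinh_le_mul_cosh {y : ℝ} (hy : 0 ≤ y) : sinh y ≤ y * cosh y := by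
  have hderiv (s : ℝ) : HasDerivAt (fun s => s * cosh s - sinh s) (s * sinh s) s :=
    (((hasDerivAt_id' s).mul (hasDerivAt_cosh s)).sub (hasDerivAt_sinh s)).congr_deriv (by ring)
  have hmono := monotone_of_hasDerivAt_nonneg hderiv fun s => by
    rcases le_total 0 s with hs | hs
    · exact mul_nonneg hs (sinh_nonneg_iff.2 hs)
    · exact mul_nonneg_of_nonpos_of_nonpos hs (sinh_nonpos_iff.2 hs)
  simpa using hmono hy

theorem Real.abs_tanh_le_abs (y : ℝ) : |tanh y| ≤ |y| := by
  rw [tanh_eq_sinh_div_cosh, abs_div, abs_sinh, abs_of_pos (cosh_pos y), ← cosh_abs,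
    div_le_iff₀ (cosh_pos _)]
  exact sinh_le_mul_cosh (abs_nonneg y)

theorem abs_convex_comb_le {z a b : ℝ} (hz0 : 0 ≤ z) (hz1 : z ≤ 1) :
    |z * a + (1 - z) * b| ≤ z * |a| + (1 - z) * |b| := by
  refine (abs_add_le _ _).trans_eq ?_
  rw [abs_mul, abs_mul, abs_of_nonneg hz0, abs_of_nonneg (sub_nonneg.2 hz1)]

section Norms

variable {n m p : ℕ}

theorem abs_le_pi_norm (v : Fin n → ℝ) (i : Fin n) : |v i| ≤ ‖v‖ := by
  simpa only [Real.norm_eq_abs] using norm_le_pi_norm v i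

theorem abs_mulVec_apply_le (A : Matrix (Fin n) (Fin m) ℝ) (v : Fin m → ℝ) (i : Fin n) :
    |(A *ᵥ v) i| ≤ (∑ j, |A i j|) * ‖v‖ := by
  rw [mulVec, dotProduct, Finset.sum_mul]
  refine (Finset.abs_sum_le_sum_abs _ _).trans (Finset.sum_le_sum fun j _ => ?_)
  rw [abs_mul]
  exact mul_le_mul_of_nonneg_left (abs_le_pi_norm v j) (abs_nonneg _)

theorem sum_abs_le_matNorm (A : Matrix (Fin n) (Fin m) ℝ) (i : Fin n) :
    ∑ j, |A i j| ≤ matNorm A :=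
  le_ciSup (f := fun i => ∑ j, |A i j|) (Set.finite_range _).bddAbove i

theorem matNorm_nonneg (A : Matrix (Fin n) (Fin m) ℝ) : 0 ≤ matNorm A :=
  Real.iSup_nonneg fun _ => Finset.sum_nonneg fun _ _ => abs_nonneg _

theorem norm_mulVec_le_matNorm (A : Matrix (Fin n) (Fin m) ℝ) (v : Fin m → ℝ) :
    ‖A *ᵥ v‖ ≤ matNorm A * ‖v‖ :=
  (pi_norm_le_iff_of_nonneg (mul_nonneg (matNorm_nonneg A) (norm_nonneg v))).2 fun i =>
    (abs_mulVec_apply_le A v i).trans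
      (mul_le_mul_of_nonneg_right (sum_abs_le_matNorm A i) (norm_nonneg v))

theorem mulVec_add_mulVec_add_apply_le {A : Matrix (Fin n) (Fin m) ℝ}
    {B : Matrix (Fin n) (Fin p) ℝ} {c : Fin n → ℝ} {u : Fin m → ℝ} {x : Fin p → ℝ} {r : ℝ}
    (hu : ‖u‖ ≤ r) (hx : ‖x‖ ≤ r) (hr : 1 ≤ r) (i : Fin n) :
    (A *ᵥ u + B *ᵥ x + c) i ≤ catNorm A B c * r := by
  have hrow : ∑ j, |A i j| + ∑ j, |B i j| + |c i| ≤ catNorm A B c :=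
    le_ciSup (f := fun i => ∑ j, |A i j| + ∑ j, |B i j| + |c i|) (Set.finite_range _).bddAbove i
  have hA := (abs_mulVec_apply_le A u i).trans
    (mul_le_mul_of_nonneg_left hu (Finset.sum_nonneg fun _ _ => abs_nonneg _))
  have hB := (abs_mulVec_apply_le B x i).trans
    (mul_le_mul_of_nonneg_left hx (Finset.sum_nonneg fun _ _ => abs_nonneg _))
  have hc : |c i| ≤ |c i| * r := le_mul_of_one_le_right (abs_nonneg _) hr
  calc (A *ᵥ u + B *ᵥ x + c) i ≤ |(A *ᵥ u) i| + |(B *ᵥ x) i| + |c i| := by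
        simp only [Pi.add_apply]
        linarith [le_abs_self ((A *ᵥ u) i), le_abs_self ((B *ᵥ x) i), le_abs_self (c i)]
    _ ≤ (∑ j, |A i j| + ∑ j, |B i j| + |c i|) * r := by linarith
    _ ≤ catNorm A B c * r := mul_le_mul_of_nonneg_right hrow (by linarith)

end Norms

noncomputable def gate {m n : ℕ} (W : Matrix (Fin n) (Fin m) ℝ) (U : Matrix (Fin n) (Fin n) ℝ)
    (b : Fin n → ℝ) (u : Fin m → ℝ) (x : Fin n → ℝ) : Fin n → ℝ :=
  fun j => Real.sigmoid ((W *ᵥ u + U *ᵥ x + b) j)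

theorem gate_nonneg {m n : ℕ} (W : Matrix (Fin n) (Fin m) ℝ) (U : Matrix (Fin n) (Fin n) ℝ)
    (b : Fin n → ℝ) (u : Fin m → ℝ) (x : Fin n → ℝ) (j : Fin n) : 0 ≤ gate W U b u x j :=
  Real.sigmoid_nonneg _

theorem gate_le_one {m n : ℕ} (W : Matrix (Fin n) (Fin m) ℝ) (U : Matrix (Fin n) (Fin n) ℝ)
    (b : Fin n → ℝ) (u : Fin m → ℝ) (x : Fin n → ℝ) (j : Fin n) : gate W U b u x j ≤ 1 :=
  Real.sigmoid_le_one _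

theorem gate_le_sigmoid_catNorm {m n : ℕ} {W : Matrix (Fin n) (Fin m) ℝ}
    {U : Matrix (Fin n) (Fin n) ℝ} {b : Fin n → ℝ} {u : Fin m → ℝ} {x : Fin n → ℝ} {r : ℝ}
    (hu : ‖u‖ ≤ r) (hx : ‖x‖ ≤ r) (hr : 1 ≤ r) (j : Fin n) :
    gate W U b u x j ≤ Real.sigmoid (catNorm W U b * r) :=
  Real.sigmoid_le (mulVec_add_mulVec_add_apply_le hu hx hr j)

section GRUStep

variable {nu nx : ℕ} (Wz Wf Wr : Matrix (Fin nx) (Fin nu) ℝ) (Uz Uf Ur : Matrix (Fin nx) (Fin nx) ℝ)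
  (bz bf br : Fin nx → ℝ) (u : Fin nu → ℝ) (x : Fin nx → ℝ)

theorem gruStep_apply (j : Fin nx) :
    gruStep Wz Wf Wr Uz Uf Ur bz bf br u x j =
      gate Wz Uz bz u x j * x j +
        (1 - gate Wz Uz bz u x j) *
          Real.tanh ((Wr *ᵥ u + Ur *ᵥ (gate Wf Uf bf u x * x) + br) j) := by
  simp only [gruStep, gate, sigmoid_eq_real_sigmoid]
  rfl

theorem norm_gruStep_le_one_add {ζ : ℝ} (hζ0 : 0 ≤ ζ) (hζ : ∀ j, gate Wz Uz bz u x j ≤ ζ) :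
    ‖gruStep Wz Wf Wr Uz Uf Ur bz bf br u x‖ ≤ 1 + ζ * max (‖x‖ - 1) 0 := by
  refine (pi_norm_le_iff_of_nonneg (by positivity)).2 fun j => ?_
  rw [Real.norm_eq_abs, gruStep_apply]
  set z := gate Wz Uz bz u x j
  have hz0 : 0 ≤ z := gate_nonneg Wz Uz bz u x j
  have hz1 : z ≤ 1 := gate_le_one Wz Uz bz u x j
  have h1z : 0 ≤ 1 - z := sub_nonneg.2 hz1
  have hxj : |x j| - 1 ≤ max (‖x‖ - 1) 0 := le_max_of_le_left (by linarith [abs_le_pi_norm x j])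
  calc |z * x j + (1 - z) * Real.tanh _|
      ≤ z * |x j| + (1 - z) * |Real.tanh _| := abs_convex_comb_le hz0 hz1
    _ ≤ z * |x j| + (1 - z) * 1 := by gcongr; exact (Real.abs_tanh_lt_one _).le
    _ = 1 + z * (|x j| - 1) := by ring
    _ ≤ 1 + ζ * max (‖x‖ - 1) 0 := by
      gcongr 1 + ?_
      exact (mul_le_mul_of_nonneg_left hxj hz0).trans
        (mul_le_mul_of_nonneg_right (hζ j) (le_max_right _ _))

theorem norm_gruStep_le_contraction {φ ζ : ℝ} (hφ0 : 0 ≤ φ) (hφ : ∀ j, gate Wf Uf bf u x j ≤ φ)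
    (hζ0 : 0 ≤ ζ) (hζ : ∀ j, gate Wz Uz bz u x j ≤ ζ) (hμ : matNorm Ur * φ ≤ 1) :
    ‖gruStep Wz Wf Wr Uz Uf Ur bz bf br u x‖ ≤
      (matNorm Ur * φ + ζ * (1 - matNorm Ur * φ)) * ‖x‖ + (matNorm Wr * ‖u‖ + ‖br‖) := by
  set μ := matNorm Ur * φ
  set P := matNorm Wr * ‖u‖ + ‖br‖
  have hμ0 : 0 ≤ μ := mul_nonneg (matNorm_nonneg Ur) hφ0
  have hP : 0 ≤ P := add_nonneg (mul_nonneg (matNorm_nonneg Wr) (norm_nonneg u)) (norm_nonneg br)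
  have hfx : ‖gate Wf Uf bf u x * x‖ ≤ φ * ‖x‖ := by
    refine (norm_mul_le _ _).trans (mul_le_mul_of_nonneg_right ?_ (norm_nonneg x))
    refine (pi_norm_le_iff_of_nonneg hφ0).2 fun j => ?_
    rw [Real.norm_eq_abs, abs_of_nonneg (gate_nonneg Wf Uf bf u x j)]
    exact hφ j
  have hr (j : Fin nx) :
      |Real.tanh ((Wr *ᵥ u + Ur *ᵥ (gate Wf Uf bf u x * x) + br) j)| ≤ μ * ‖x‖ + P := by
    refine (Real.abs_tanh_le_abs _).trans ((abs_le_pi_norm _ j).trans ?_)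
    calc ‖Wr *ᵥ u + Ur *ᵥ (gate Wf Uf bf u x * x) + br‖
        ≤ ‖Wr *ᵥ u‖ + ‖Ur *ᵥ (gate Wf Uf bf u x * x)‖ + ‖br‖ := norm_add₃_le
      _ ≤ matNorm Wr * ‖u‖ + matNorm Ur * (φ * ‖x‖) + ‖br‖ := by
        gcongr
        · exact norm_mulVec_le_matNorm Wr u
        · exact (norm_mulVec_le_matNorm Ur _).trans
            (mul_le_mul_of_nonneg_left hfx (matNorm_nonneg Ur))
      _ = μ * ‖x‖ + P := by ring
  have hcoef : 0 ≤ μ + ζ * (1 - μ) := add_nonneg hμ0 (mul_nonneg hζ0 (sub_nonneg.2 hμ))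
  refine (pi_norm_le_iff_of_nonneg (add_nonneg (mul_nonneg hcoef (norm_nonneg x)) hP)).2 fun j => ?_
  rw [Real.norm_eq_abs, gruStep_apply]
  set z := gate Wz Uz bz u x j
  have hz0 : 0 ≤ z := gate_nonneg Wz Uz bz u x j
  have hz1 : z ≤ 1 := gate_le_one Wz Uz bz u x j
  have h1z : 0 ≤ 1 - z := sub_nonneg.2 hz1
  calc |z * x j + (1 - z) * Real.tanh _|
      ≤ z * |x j| + (1 - z) * |Real.tanh _| := abs_convex_comb_le hz0 hz1
    _ ≤ z * ‖x‖ + (1 - z) * (μ * ‖x‖ + P) := by gcongr; exacts [abs_le_pi_norm x j, hr j]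
    _ = (μ + z * (1 - μ)) * ‖x‖ + (1 - z) * P := by ring
    _ ≤ (μ + ζ * (1 - μ)) * ‖x‖ + P := by
      gcongr ?_ * _ + ?_
      · exact add_le_add_right (mul_le_mul_of_nonneg_right (hζ j) (sub_nonneg.2 hμ)) μ
      · exact mul_le_of_le_one_left hP (by linarith)

end GRUStep

section Cascade

variable {M : ℕ} {c w δ ρ g : ℝ}

theorem cascade_step_le {a b : ℕ → ℝ} {e R : ℝ} (hc : 0 ≤ c) (hw : 0 ≤ w) (hδ0 : 0 ≤ δ)
    (hδ1 : δ ≤ 1) (hwδ : w * δ ≤ 1 / 2) (hρ : c + w * δ ≤ ρ) (hρ1 : ρ ≤ 1) (he : 0 ≤ e)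
    (hg : 0 ≤ g) (hR : 0 ≤ R) (ha : ∀ i < M, δ ^ i * a i ≤ R)
    (hb0 : 0 < M → b 0 ≤ c * a 0 + w * e + g)
    (hbs : ∀ i, i + 1 < M → b (i + 1) ≤ c * a (i + 1) + w * b i + g) :
    ∀ i < M, δ ^ i * b i ≤ ρ * R + 2 * (w * e + g) := by
  have hwδ0 : 0 ≤ w * δ := mul_nonneg hw hδ0
  have hwe : 0 ≤ w * e := mul_nonneg hw he
  intro i
  induction i with
  | zero =>
    intro hM
    have ha0 := ha 0 hM
    rw [pow_zero, one_mul] at ha0 ⊢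
    nlinarith [hb0 hM]
  | succ i ih =>
    intro hi
    have hpow : δ ^ (i + 1) ≤ 1 := pow_le_one₀ hδ0 hδ1
    calc δ ^ (i + 1) * b (i + 1) ≤ δ ^ (i + 1) * (c * a (i + 1) + w * b i + g) :=
          mul_le_mul_of_nonneg_left (hbs i hi) (pow_nonneg hδ0 _)
      _ = c * (δ ^ (i + 1) * a (i + 1)) + w * δ * (δ ^ i * b i) + δ ^ (i + 1) * g := by ring
      _ ≤ c * R + w * δ * (ρ * R + 2 * (w * e + g)) + 1 * g := by
        gcongr
        exacts [ha (i + 1) hi, ih (by omega)]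
      _ ≤ ρ * R + 2 * (w * e + g) := by
        nlinarith [mul_le_mul_of_nonneg_left hρ1 (mul_nonneg hwδ0 hR)]

theorem cascade_weighted_le {a : ℕ → ℕ → ℝ} {e : ℕ → ℝ} {E θ : ℝ} (hc : 0 ≤ c) (hw : 0 ≤ w)
    (hδ0 : 0 ≤ δ) (hδ1 : δ ≤ 1) (hwδ : w * δ ≤ 1 / 2) (hρ : c + w * δ ≤ ρ) (hρ1 : ρ < 1)
    (hE : ∀ t, e t ≤ E) (hE0 : 0 ≤ E) (hg : 0 ≤ g) (hθ : 0 ≤ θ) (ha0 : ∀ i < M, a 0 i ≤ θ)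
    (h0 : ∀ t, 0 < M → a (t + 1) 0 ≤ c * a t 0 + w * e t + g)
    (hs : ∀ t i, i + 1 < M → a (t + 1) (i + 1) ≤ c * a t (i + 1) + w * a (t + 1) i + g)
    (t : ℕ) : ∀ i < M, δ ^ i * a t i ≤ ρ ^ t * θ + 2 * (w * E + g) / (1 - ρ) := by
  have hρ0 : 0 ≤ ρ := (add_nonneg hc (mul_nonneg hw hδ0)).trans hρ
  have hH : 0 ≤ 2 * (w * E + g) / (1 - ρ) :=
    div_nonneg (by positivity) (sub_nonneg.2 hρ1.le)
  induction t with
  | zero =>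
    intro i hi
    rw [pow_zero, one_mul]
    calc δ ^ i * a 0 i ≤ δ ^ i * θ := mul_le_mul_of_nonneg_left (ha0 i hi) (pow_nonneg hδ0 i)
      _ ≤ 1 * θ := mul_le_mul_of_nonneg_right (pow_le_one₀ hδ0 hδ1) hθ
      _ ≤ θ + 2 * (w * E + g) / (1 - ρ) := by linarith
  | succ t ih =>
    intro i hi
    refine (cascade_step_le hc hw hδ0 hδ1 hwδ hρ hρ1.le hE0 hg (by positivity) ih
      (fun hM => (h0 t hM).trans (by gcongr; exact hE t)) (hs t) i hi).trans_eq ?_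
    field_simp [(sub_pos.2 hρ1).ne']
    ring

theorem cascade_le {a : ℕ → ℕ → ℝ} {e : ℕ → ℝ} {E θ : ℝ} (hc : 0 ≤ c) (hw : 0 ≤ w)
    (hδ0 : 0 < δ) (hδ1 : δ ≤ 1) (hwδ : w * δ ≤ 1 / 2) (hρ : c + w * δ ≤ ρ) (hρ1 : ρ < 1)
    (hE : ∀ t, e t ≤ E) (hE0 : 0 ≤ E) (hg : 0 ≤ g) (hθ : 0 ≤ θ) (ha : ∀ t i, 0 ≤ a t i)
    (ha0 : ∀ i < M, a 0 i ≤ θ) (h0 : ∀ t, 0 < M → a (t + 1) 0 ≤ c * a t 0 + w * e t + g)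
    (hs : ∀ t i, i + 1 < M → a (t + 1) (i + 1) ≤ c * a t (i + 1) + w * a (t + 1) i + g)
    (t : ℕ) (i : ℕ) (hi : i < M) :
    a t i ≤ (δ ^ M)⁻¹ * ρ ^ t * θ + 2 * (w * E + g) / ((1 - ρ) * δ ^ M) := by
  have hδM : 0 < δ ^ M := pow_pos hδ0 M
  have hweighted := cascade_weighted_le hc hw hδ0.le hδ1 hwδ hρ hρ1 hE hE0 hg hθ ha0 h0 hs t i hi
  have hle : δ ^ M * a t i ≤ δ ^ i * a t i :=
    mul_le_mul_of_nonneg_right (pow_le_pow_of_le_one hδ0.le hδ1 hi.le) (ha t i)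
  rw [← mul_le_mul_iff_of_pos_left hδM]
  calc δ ^ M * a t i ≤ ρ ^ t * θ + 2 * (w * E + g) / (1 - ρ) := hle.trans hweighted
    _ = δ ^ M * ((δ ^ M)⁻¹ * ρ ^ t * θ + 2 * (w * E + g) / ((1 - ρ) * δ ^ M)) := by
      field_simp

theorem exists_cascade_weight {c w : ℝ} (hc0 : 0 ≤ c) (hc1 : c < 1) (hw0 : 0 ≤ w) :
    ∃ δ ρ : ℝ, 0 < δ ∧ δ ≤ 1 ∧ w * δ ≤ 1 / 2 ∧ c + w * δ ≤ ρ ∧ 0 < ρ ∧ ρ < 1 := by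
  have hwδ : w * ((1 - c) / (2 * (w + 1))) ≤ (1 - c) / 2 := by
    rw [show w * ((1 - c) / (2 * (w + 1))) = (1 - c) / 2 * (w / (w + 1)) by field_simp]
    exact mul_le_of_le_one_right (by linarith) (div_le_one_of_le₀ (by linarith) (by positivity))
  refine ⟨(1 - c) / (2 * (w + 1)), (1 + c) / 2, div_pos (by linarith) (by positivity),
    div_le_one_of_le₀ (by nlinarith) (by positivity), by linarith, by linarith, by linarith,
    by linarith⟩

end Cascade

theorem le_mul_pow_mul_add_of_tail {a : ℕ → ℝ} {Λ C ρ s θ h : ℝ} {K : ℕ} (hρ0 : 0 < ρ)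
    (hρ1 : ρ ≤ 1) (hC : 0 ≤ C) (hθ : 1 ≤ θ) (hs : 0 ≤ s) (hh : 0 ≤ h) (hΛ : ∀ k, a k ≤ Λ)
    (hsmall : s ≤ 1 → ∀ k, a k ≤ C * ρ ^ k * s + h)
    (htail : ∀ t, a (K + t) ≤ C * ρ ^ t * θ + h) (k : ℕ) :
    a k ≤ max (C * θ) Λ / ρ ^ K * ρ ^ k * s + h := by
  set B := max (C * θ) Λ
  have hρK : 0 < ρ ^ K := pow_pos hρ0 K
  have hCθ : C * θ ≤ B := le_max_left _ _
  have hB : 0 ≤ B := (mul_nonneg hC (zero_le_one.trans hθ)).trans hCθ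
  rcases le_or_gt s 1 with hs1 | hs1
  · have hCB : C ≤ B / ρ ^ K := by
      rw [le_div_iff₀ hρK]
      calc C * ρ ^ K ≤ C * 1 := mul_le_mul_of_nonneg_left (pow_le_one₀ hρ0.le hρ1) hC
        _ ≤ C * θ := mul_le_mul_of_nonneg_left hθ hC
        _ ≤ B := hCθ
    refine (hsmall hs1 k).trans ?_
    gcongr
  rcases le_or_gt K k with hKk | hkK
  · obtain ⟨t, rfl⟩ := Nat.exists_eq_add_of_le hKk
    calc a (K + t) ≤ C * θ * ρ ^ t * 1 + h := by linarith [htail t]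
      _ ≤ B * ρ ^ t * s + h := by gcongr
      _ = B / ρ ^ K * ρ ^ (K + t) * s + h := by
        rw [pow_add]
        field_simp
  · have hKk : ρ ^ K ≤ ρ ^ k := pow_le_pow_of_le_one hρ0.le hρ1 hkK.le
    have hBk : B ≤ B / ρ ^ K * ρ ^ k := by
      rw [div_mul_eq_mul_div, le_div_iff₀ hρK]
      exact mul_le_mul_of_nonneg_left hKk hB
    calc a k ≤ B := (hΛ k).trans (le_max_right _ _)
      _ ≤ B / ρ ^ K * ρ ^ k * s := hBk.trans (le_mul_of_one_le_right (hB.trans hBk) hs1.le)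
      _ ≤ B / ρ ^ K * ρ ^ k * s + h := le_add_of_nonneg_right hh

theorem isKInf_const_mul {G : ℝ} (hG : 0 < G) : IsKInf fun r => G * r := by
  refine ⟨(continuous_const_mul G).continuousOn, fun a _ b _ hab => mul_lt_mul_of_pos_left hab hG,
    mul_zero G, fun M => ⟨|M| / G + 1, by positivity, ?_⟩⟩
  show M < G * (|M| / G + 1)
  rw [mul_add, mul_div_cancel₀ _ hG.ne', mul_one]
  linarith [le_abs_self M]

theorem isKL_mul_pow_mul {B ρ : ℝ} (hB : 0 < B) (hρ0 : 0 < ρ) (hρ1 : ρ < 1) :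
    IsKL fun s k => B * ρ ^ k * s := by
  refine ⟨fun k => isKInf_const_mul (by positivity), fun s hs k l hkl => ?_, fun s _ => ?_⟩
  · show B * ρ ^ l * s ≤ B * ρ ^ k * s
    gcongr B * ?_ * s
    exact pow_le_pow_of_le_one hρ0.le hρ1.le hkl
  · simpa using ((tendsto_pow_atTop_nhds_zero_of_lt_one hρ0.le hρ1).const_mul B).mul_const s

theorem exists_forall_le_of_forall_lt {f : ℕ → ℝ} {a b : ℝ} (hb : b < a) :
    ∀ M, (∀ i < M, f i < a) → ∃ c, b ≤ c ∧ c < a ∧ ∀ i < M, f i ≤ c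
  | 0, _ => ⟨b, le_rfl, hb, fun _ hi => absurd hi (Nat.not_lt_zero _)⟩
  | M + 1, hf => by
    obtain ⟨c, hbc, hca, hc⟩ := exists_forall_le_of_forall_lt hb M fun i hi => hf i (by omega)
    refine ⟨max c (f M), le_max_of_le_left hbc, max_lt hca (hf M M.lt_succ_self), fun i hi => ?_⟩
    rcases Nat.lt_succ_iff_lt_or_eq.1 hi with hi | rfl
    exacts [le_max_of_le_left (hc i hi), le_max_right _ _]

theorem exists_pos_forall_lt_of_continuousAt {M : ℕ} {f : ℕ → ℝ → ℝ} {a : ℝ}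
    (hf : ∀ i < M, ContinuousAt (f i) 0) (h : ∀ i < M, f i 0 < a) :
    ∃ ε > 0, ∀ i < M, f i ε < a := by
  have hev : ∀ᶠ ε in nhdsWithin 0 (Set.Ioi 0), ∀ i ∈ Finset.range M, f i ε < a :=
    (Filter.eventually_all_finset _).2 fun i hi =>
      nhdsWithin_le_nhds (((hf i (Finset.mem_range.1 hi)).tendsto).eventually_lt_const
        (h i (Finset.mem_range.1 hi)))
  obtain ⟨ε, hε, hpos⟩ := (hev.and self_mem_nhdsWithin).exists
  exact ⟨ε, hpos, fun i hi => hε i (Finset.mem_range.2 hi)⟩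

-- On the ball of radius `r`, `σ(‖[W U b]‖ r)` bounds the update and forget gates, and the layer
-- contracts its state by this factor.
noncomputable def gruRate {nu nx : ℕ} (Wz Wf : Matrix (Fin nx) (Fin nu) ℝ)
    (Uz Uf Ur : Matrix (Fin nx) (Fin nx) ℝ) (bz bf : Fin nx → ℝ) (r : ℝ) : ℝ :=
  matNorm Ur * Real.sigmoid (catNorm Wf Uf bf * r) +
    Real.sigmoid (catNorm Wz Uz bz * r) * (1 - matNorm Ur * Real.sigmoid (catNorm Wf Uf bf * r))

def layerInput {nu : ℕ} {n : ℕ → ℕ} (u : ℕ → Fin nu → ℝ) (x : ℕ → ∀ i : ℕ, Fin (n i) → ℝ)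
    (k : ℕ) : ∀ i : ℕ, Fin (inDim nu n i) → ℝ
  | 0 => u k
  | i + 1 => x (k + 1) i

def IsDeepGRUTrajectory {nu : ℕ} {n : ℕ → ℕ} (M : ℕ)
    (Wz Wf Wr : ∀ i : ℕ, Matrix (Fin (n i)) (Fin (inDim nu n i)) ℝ)
    (Uz Uf Ur : ∀ i : ℕ, Matrix (Fin (n i)) (Fin (n i)) ℝ) (bz bf br : ∀ i : ℕ, Fin (n i) → ℝ)
    (u : ℕ → Fin nu → ℝ) (x : ℕ → ∀ i : ℕ, Fin (n i) → ℝ) : Prop :=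
  ∀ k, ∀ i < M, x (k + 1) i =
    gruStep (Wz i) (Wf i) (Wr i) (Uz i) (Uf i) (Ur i) (bz i) (bf i) (br i)
      (layerInput u x k i) (x k i)

section DeepGRU

variable {nu M : ℕ} {n : ℕ → ℕ} {Wz Wf Wr : ∀ i : ℕ, Matrix (Fin (n i)) (Fin (inDim nu n i)) ℝ}
  {Uz Uf Ur : ∀ i : ℕ, Matrix (Fin (n i)) (Fin (n i)) ℝ} {bz bf br : ∀ i : ℕ, Fin (n i) → ℝ}
  {u : ℕ → Fin nu → ℝ} {x : ℕ → ∀ i : ℕ, Fin (n i) → ℝ}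

theorem isDeepGRUTrajectory_of_step
    (h0 : ∀ k, 0 < M → x (k + 1) 0 =
      gruStep (Wz 0) (Wf 0) (Wr 0) (Uz 0) (Uf 0) (Ur 0) (bz 0) (bf 0) (br 0) (u k) (x k 0))
    (hs : ∀ k, ∀ i : ℕ, i + 1 < M → x (k + 1) (i + 1) =
      gruStep (Wz (i + 1)) (Wf (i + 1)) (Wr (i + 1)) (Uz (i + 1)) (Uf (i + 1)) (Ur (i + 1))
        (bz (i + 1)) (bf (i + 1)) (br (i + 1)) (x (k + 1) i) (x k (i + 1))) :
    IsDeepGRUTrajectory M Wz Wf Wr Uz Uf Ur bz bf br u x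
  | k, 0, hM => h0 k hM
  | k, i + 1, hi => hs k i hi

namespace IsDeepGRUTrajectory

variable (hx : IsDeepGRUTrajectory M Wz Wf Wr Uz Uf Ur bz bf br u x)
include hx

theorem norm_le_one_add_pow {ζ d : ℝ} (hζ0 : 0 ≤ ζ)
    (hgate : ∀ k, ∀ i < M, ∀ j, gate (Wz i) (Uz i) (bz i) (layerInput u x k i) (x k i) j ≤ ζ)
    (hd0 : 0 ≤ d) (hd : ∀ i < M, ‖x 0 i‖ ≤ 1 + d) (k : ℕ) :
    ∀ i < M, ‖x k i‖ ≤ 1 + ζ ^ k * d := by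
  induction k with
  | zero => simpa using hd
  | succ k ih =>
    intro i hi
    have hexcess : max (‖x k i‖ - 1) 0 ≤ ζ ^ k * d :=
      max_le (by linarith [ih i hi]) (by positivity)
    rw [hx k i hi]
    calc _ ≤ 1 + ζ * max (‖x k i‖ - 1) 0 := norm_gruStep_le_one_add _ _ _ _ _ _ _ _ _ _ _ hζ0
          (hgate k i hi)
      _ ≤ 1 + ζ * (ζ ^ k * d) := by gcongr
      _ = 1 + ζ ^ (k + 1) * d := by ring

theorem norm_le {Λ : ℝ} (hΛ : 1 ≤ Λ) (hx0 : ∀ i < M, ‖x 0 i‖ ≤ Λ) (k : ℕ) :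
    ∀ i < M, ‖x k i‖ ≤ Λ := by
  simpa using hx.norm_le_one_add_pow zero_le_one (fun k i _ => gate_le_one _ _ _ _ _)
    (sub_nonneg.2 hΛ) (fun i hi => by linarith [hx0 i hi]) k

theorem eventually_norm_le {Λ ε c : ℝ} {K : ℕ} (hΛ : 1 ≤ Λ) (hc0 : 0 ≤ c) (hc1 : c ≤ 1)
    (hgate : ∀ i < M, Real.sigmoid (catNorm (Wz i) (Uz i) (bz i) * Λ) ≤ c)
    (hK : c ^ K * Λ ≤ ε) (hu : ∀ k, ‖u k‖ ≤ 1) (hx0 : ∀ i < M, ‖x 0 i‖ ≤ Λ) :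
    ∀ k ≥ K, ∀ i < M, ‖x k i‖ ≤ 1 + ε := by
  have hball (k : ℕ) (i : ℕ) (hi : i < M) : ‖layerInput u x k i‖ ≤ Λ ∧ ‖x k i‖ ≤ Λ := by
    refine ⟨?_, hx.norm_le hΛ hx0 k i hi⟩
    cases i with
    | zero => exact (hu k).trans hΛ
    | succ i => exact hx.norm_le hΛ hx0 (k + 1) i (by omega)
  have happroach := hx.norm_le_one_add_pow hc0
    (fun k i hi j => (gate_le_sigmoid_catNorm (hball k i hi).1 (hball k i hi).2
      hΛ j).trans (hgate i hi)) (sub_nonneg.2 hΛ) (fun i hi => by linarith [hx0 i hi])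
  intro k hk i hi
  calc ‖x k i‖ ≤ 1 + c ^ k * (Λ - 1) := happroach k i hi
    _ ≤ 1 + c ^ K * Λ := by
      gcongr 1 + ?_
      exact mul_le_mul (pow_le_pow_of_le_one hc0 hc1 hk) (by linarith) (by linarith)
        (pow_nonneg hc0 K)
    _ ≤ 1 + ε := by linarith

theorem norm_succ_le {r c w g : ℝ} {k : ℕ} (hr : 1 ≤ r) (hc1 : c < 1)
    (hrate : ∀ i < M, gruRate (Wz i) (Wf i) (Uz i) (Uf i) (Ur i) (bz i) (bf i) r ≤ c)
    (hw : ∀ i < M, matNorm (Wr i) ≤ w) (hg : ∀ i < M, ‖br i‖ ≤ g) (hu : ‖u k‖ ≤ r)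
    (hxk : ∀ i < M, ‖x k i‖ ≤ r) (hxk1 : ∀ i < M, ‖x (k + 1) i‖ ≤ r) :
    ∀ i < M, ‖x (k + 1) i‖ ≤ c * ‖x k i‖ + w * ‖layerInput u x k i‖ + g := by
  intro i hi
  have hin : ‖layerInput u x k i‖ ≤ r := by
    cases i with
    | zero => exact hu
    | succ i => exact hxk1 i (by omega)
  have hrate_i := hrate i hi
  unfold gruRate at hrate_i
  have hμ : matNorm (Ur i) * Real.sigmoid (catNorm (Wf i) (Uf i) (bf i) * r) ≤ 1 := by
    nlinarith [Real.sigmoid_lt_one (catNorm (Wz i) (Uz i) (bz i) * r)]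
  rw [hx k i hi]
  refine (norm_gruStep_le_contraction _ _ _ _ _ _ _ _ _ _ _ (Real.sigmoid_nonneg _)
    (gate_le_sigmoid_catNorm hin (hxk i hi) hr) (Real.sigmoid_nonneg _)
    (gate_le_sigmoid_catNorm hin (hxk i hi) hr) hμ).trans ?_
  have hcx := mul_le_mul_of_nonneg_right hrate_i (norm_nonneg (x k i))
  have hwu := mul_le_mul_of_nonneg_right (hw i hi) (norm_nonneg (layerInput u x k i))
  linarith [hg i hi]

theorem norm_le_of_forall_le {r c w g δ ρ su θ : ℝ} {K : ℕ} (hr : 1 ≤ r) (hc0 : 0 ≤ c)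
    (hc1 : c < 1) (hrate : ∀ i < M, gruRate (Wz i) (Wf i) (Uz i) (Uf i) (Ur i) (bz i) (bf i) r ≤ c)
    (hw0 : 0 ≤ w) (hw : ∀ i < M, matNorm (Wr i) ≤ w) (hg0 : 0 ≤ g) (hg : ∀ i < M, ‖br i‖ ≤ g)
    (hδ0 : 0 < δ) (hδ1 : δ ≤ 1) (hwδ : w * δ ≤ 1 / 2) (hρ : c + w * δ ≤ ρ) (hρ1 : ρ < 1)
    (hur : ∀ k, ‖u k‖ ≤ r) (hu : ∀ k, ‖u k‖ ≤ su) (hθ0 : 0 ≤ θ) (hθ : ∀ i < M, ‖x K i‖ ≤ θ)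
    (hreg : ∀ k ≥ K, ∀ i < M, ‖x k i‖ ≤ r) (t i : ℕ) (hi : i < M) :
    ‖x (K + t) i‖ ≤ (δ ^ M)⁻¹ * ρ ^ t * θ + 2 * (w * su + g) / ((1 - ρ) * δ ^ M) := by
  have hstep (t : ℕ) := hx.norm_succ_le hr hc1 hrate hw hg (hur (K + t))
    (hreg (K + t) (by omega)) (hreg (K + t + 1) (by omega))
  exact cascade_le (a := fun t i => ‖x (K + t) i‖) (e := fun t => ‖u (K + t)‖) hc0 hw0 hδ0 hδ1
    hwδ hρ hρ1 (fun t => hu (K + t)) ((norm_nonneg _).trans (hu 0)) hg0 hθ0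
    (fun _ _ => norm_nonneg _) hθ (fun t hM => hstep t 0 hM) (fun t i hi => hstep t (i + 1) hi)
    t i hi

end IsDeepGRUTrajectory

end DeepGRU

section DeepGRUGains

variable {nu M : ℕ} {n : ℕ → ℕ} {Wz Wf Wr : ∀ i : ℕ, Matrix (Fin (n i)) (Fin (inDim nu n i)) ℝ}
  {Uz Uf Ur : ∀ i : ℕ, Matrix (Fin (n i)) (Fin (n i)) ℝ} {bz bf : ∀ i : ℕ, Fin (n i) → ℝ}

theorem exists_contraction_constants
    (hcond : ∀ i < M, matNorm (Ur i) * Real.sigmoid (catNorm (Wf i) (Uf i) (bf i)) < 1) (Λ : ℝ) :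
    ∃ ε c : ℝ, 0 < ε ∧ 0 ≤ c ∧ c < 1 ∧
      (∀ i < M, gruRate (Wz i) (Wf i) (Uz i) (Uf i) (Ur i) (bz i) (bf i) (1 + ε) ≤ c) ∧
      ∀ i < M, Real.sigmoid (catNorm (Wz i) (Uz i) (bz i) * Λ) ≤ c := by
  obtain ⟨ε, hε, hμ⟩ := exists_pos_forall_lt_of_continuousAt
    (f := fun i ε => matNorm (Ur i) * Real.sigmoid (catNorm (Wf i) (Uf i) (bf i) * (1 + ε)))
    (fun i _ => by fun_prop) (fun i hi => by simpa using hcond i hi)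
  obtain ⟨c, hc0, hc1, hc⟩ := exists_forall_le_of_forall_lt
    (f := fun i => max (gruRate (Wz i) (Wf i) (Uz i) (Uf i) (Ur i) (bz i) (bf i) (1 + ε))
      (Real.sigmoid (catNorm (Wz i) (Uz i) (bz i) * Λ))) zero_lt_one M
    fun i hi => max_lt (by
      have hζ := Real.sigmoid_lt_one (catNorm (Wz i) (Uz i) (bz i) * (1 + ε))
      unfold gruRate
      nlinarith [mul_pos (sub_pos.2 (hμ i hi)) (sub_pos.2 hζ)]) (Real.sigmoid_lt_one _)
  exact ⟨ε, c, hε, hc0, hc1, fun i hi => (le_max_left _ _).trans (hc i hi),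
    fun i hi => (le_max_right _ _).trans (hc i hi)⟩

theorem exists_iss_gains
    (hcond : ∀ i < M, matNorm (Ur i) * Real.sigmoid (catNorm (Wf i) (Uf i) (bf i)) < 1)
    {Λ : ℝ} (hΛ : 1 ≤ Λ) :
    ∃ B ρ G : ℝ, 0 < B ∧ 0 < ρ ∧ ρ < 1 ∧ 0 < G ∧
      ∀ (br : ∀ i : ℕ, Fin (n i) → ℝ) (u : ℕ → Fin nu → ℝ) (x : ℕ → ∀ i : ℕ, Fin (n i) → ℝ),
        IsDeepGRUTrajectory M Wz Wf Wr Uz Uf Ur bz bf br u x →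
        (∀ i < M, ‖x 0 i‖ ≤ Λ) → (∀ k, ‖u k‖ ≤ 1) →
        ∀ s su g : ℝ, 0 ≤ s → (∀ i < M, ‖x 0 i‖ ≤ s) → (∀ k, ‖u k‖ ≤ su) →
          (∀ i < M, ‖br i‖ ≤ g) → ∀ k, ∀ i < M, ‖x k i‖ ≤ B * ρ ^ k * s + G * su + G * g := by
  obtain ⟨ε, c, hε, hc0, hc1, hrate, hgate⟩ :=
    exists_contraction_constants (Wz := Wz) (Uz := Uz) (bz := bz) hcond Λ
  set w := ∑ i ∈ Finset.range M, matNorm (Wr i)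
  have hw0 : 0 ≤ w := Finset.sum_nonneg fun i _ => matNorm_nonneg _
  have hw : ∀ i < M, matNorm (Wr i) ≤ w := fun i hi =>
    Finset.single_le_sum (fun j _ => matNorm_nonneg (Wr j)) (Finset.mem_range.2 hi)
  obtain ⟨δ, ρ, hδ0, hδ1, hwδ, hρ, hρ0, hρ1⟩ := exists_cascade_weight hc0 hc1 hw0
  obtain ⟨K, hK⟩ := exists_pow_lt_of_lt_one (div_pos hε (by linarith : (0 : ℝ) < Λ)) hc1
  have hD : 0 < (1 - ρ) * δ ^ M := mul_pos (by linarith) (pow_pos hδ0 M)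
  refine ⟨max ((δ ^ M)⁻¹ * (1 + ε)) Λ / ρ ^ K, ρ, 2 * (w + 1) / ((1 - ρ) * δ ^ M),
    div_pos ((by linarith : (0 : ℝ) < Λ).trans_le (le_max_right _ _)) (pow_pos hρ0 K), hρ0, hρ1,
    div_pos (by positivity) hD, ?_⟩
  intro br u x hx hxΛ hu1 s su g hs hxs hu hg k i hi
  have hg0 : 0 ≤ g := (norm_nonneg _).trans (hg i hi)
  have hsu0 : 0 ≤ su := (norm_nonneg _).trans (hu 0)
  have hregion (K₀ : ℕ) {θ : ℝ} (hθ0 : 0 ≤ θ) (hθ : ∀ i < M, ‖x K₀ i‖ ≤ θ)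
      (hreg : ∀ k ≥ K₀, ∀ i < M, ‖x k i‖ ≤ 1 + ε) (t : ℕ) :=
    hx.norm_le_of_forall_le (by linarith) hc0 hc1 hrate hw0 hw hg0 hg hδ0 hδ1 hwδ hρ hρ1
      (fun k => (hu1 k).trans (by linarith)) hu hθ0 hθ hreg t i hi
  have htail := hx.eventually_norm_le hΛ hc0 hc1.le hgate
    ((lt_div_iff₀ (by linarith)).1 hK).le hu1 hxΛ
  have hsmall (hs1 : s ≤ 1) (k : ℕ) :
      ‖x k i‖ ≤ (δ ^ M)⁻¹ * ρ ^ k * s + 2 * (w * su + g) / ((1 - ρ) * δ ^ M) := by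
    simpa only [Nat.zero_add] using hregion 0 hs hxs (fun k _ i hi =>
      (hx.norm_le le_rfl (fun i hi => (hxs i hi).trans hs1) k i hi).trans (by linarith)) k
  refine (le_mul_pow_mul_add_of_tail (a := fun k => ‖x k i‖) hρ0 hρ1.le
    (inv_nonneg.2 (pow_nonneg hδ0.le M)) (by linarith : 1 ≤ 1 + ε) hs (by positivity)
    (fun k => hx.norm_le hΛ hxΛ k i hi) (fun hs1 k => hsmall hs1 k)
    (hregion K (by linarith) (htail K le_rfl) htail) k).trans ?_
  rw [add_assoc]
  gcongr
  calc 2 * (w * su + g) / ((1 - ρ) * δ ^ M) ≤ 2 * ((w + 1) * (su + g)) / ((1 - ρ) * δ ^ M) := by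
        gcongr
        nlinarith
    _ = _ := by ring

end DeepGRUGains

theorem deep_gru_ISS_general {nu M : ℕ} {n : ℕ → ℕ}
    (Wz Wf Wr : ∀ i : ℕ, Matrix (Fin (n i)) (Fin (inDim nu n i)) ℝ)
    (Uz Uf Ur : ∀ i : ℕ, Matrix (Fin (n i)) (Fin (n i)) ℝ)
    (bz bf : ∀ i : ℕ, Fin (n i) → ℝ)
    (lam : ℕ → ℝ)
    (hcond : ∀ i < M, matNorm (Ur i) * _root_.sigmoid (catNorm (Wf i) (Uf i) (bf i)) < 1) :
    ∃ β : ℝ → ℕ → ℝ, ∃ γu γb : ℝ → ℝ, IsKL β ∧ IsKInf γu ∧ IsKInf γb ∧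
      ∀ br : ∀ i : ℕ, Fin (n i) → ℝ,
        ∀ xbar : ∀ i : ℕ, Fin (n i) → ℝ, (∀ i < M, ‖xbar i‖ ≤ lam i) →
          ∀ u : ℕ → Fin nu → ℝ, (∀ t, ‖u t‖ ≤ 1) →
            ∀ x : ℕ → ∀ i : ℕ, Fin (n i) → ℝ, x 0 = xbar →
              (∀ k, 0 < M → x (k + 1) 0 =
                gruStep (Wz 0) (Wf 0) (Wr 0) (Uz 0) (Uf 0) (Ur 0) (bz 0) (bf 0) (br 0)
                  (u k) (x k 0)) →
              (∀ k, ∀ i : ℕ, i + 1 < M → x (k + 1) (i + 1) =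
                gruStep (Wz (i + 1)) (Wf (i + 1)) (Wr (i + 1)) (Uz (i + 1)) (Uf (i + 1))
                  (Ur (i + 1)) (bz (i + 1)) (bf (i + 1)) (br (i + 1))
                  (x (k + 1) i) (x k (i + 1))) →
              ∀ k : ℕ, (⨆ i : Fin M, ‖x k (i : ℕ)‖) ≤
                β (⨆ i : Fin M, ‖xbar (i : ℕ)‖) k + γu (⨆ t, ‖u t‖) +
                  γb (⨆ i : Fin M, ‖br (i : ℕ)‖) := by
  rw [sigmoid_eq_real_sigmoid] at hcond
  have hsup (f : Fin M → ℝ) (i : ℕ) (hi : i < M) : f ⟨i, hi⟩ ≤ ⨆ j, f j :=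
    le_ciSup (Set.finite_range f).bddAbove _
  obtain ⟨B, ρ, G, hB, hρ0, hρ1, hG, hgain⟩ := exists_iss_gains (Wz := Wz) (Wr := Wr) (Uz := Uz)
    (bz := bz) hcond (le_max_left 1 (⨆ i : Fin M, lam i))
  refine ⟨fun s k => B * ρ ^ k * s, fun r => G * r, fun r => G * r, isKL_mul_pow_mul hB hρ0 hρ1,
    isKInf_const_mul hG, isKInf_const_mul hG, ?_⟩
  intro br xbar hxbar u hu x hx0 h0 hs k
  subst hx0
  have hsu0 : 0 ≤ ⨆ t, ‖u t‖ := Real.iSup_nonneg fun _ => norm_nonneg _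
  have hs0 : 0 ≤ ⨆ i : Fin M, ‖x 0 i‖ := Real.iSup_nonneg fun _ => norm_nonneg _
  have hsb0 : 0 ≤ ⨆ i : Fin M, ‖br i‖ := Real.iSup_nonneg fun _ => norm_nonneg _
  refine Real.iSup_le (fun i => hgain br u x (isDeepGRUTrajectory_of_step h0 hs)
    (fun j hj => (hxbar j hj).trans (le_max_of_le_right (hsup (fun i => lam i) j hj))) hu _ _ _ hs0
    (fun j hj => hsup (fun i => ‖x 0 i‖) j hj) (le_ciSup ⟨1, Set.forall_mem_range.2 hu⟩)
    (fun j hj => hsup (fun i => ‖br i‖) j hj) k i i.2) (by positivity)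

/-- **Proposition 2 (ISS of deep GRUs).**
If every layer satisfies `‖U_r^i‖_∞ σ(‖[W_f^i U_f^i b_f^i]‖_∞) < 1`, then the deep GRU
is Input-to-State Stable: `‖x(k)‖_∞ ≤ β(‖x̄‖_∞, k) + γ_u(sup_t ‖u(t)‖_∞) + γ_b(‖b_r‖_∞)`,
where the norms of the concatenated state, initial state, and biases are the maxima
over the layers. -/
theorem deep_gru_ISS {nu M : ℕ} {n : ℕ → ℕ}
    (Wz Wf Wr : ∀ i : ℕ, Matrix (Fin (n i)) (Fin (inDim nu n i)) ℝ)
    (Uz Uf Ur : ∀ i : ℕ, Matrix (Fin (n i)) (Fin (n i)) ℝ)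
    (bz bf : ∀ i : ℕ, Fin (n i) → ℝ)
    (lam : ℕ → ℝ) (hlam : ∀ i < M, 1 ≤ lam i)
    (hcond : ∀ i < M, matNorm (Ur i) * _root_.sigmoid (catNorm (Wf i) (Uf i) (bf i)) < 1) :
    ∃ β : ℝ → ℕ → ℝ, ∃ γu γb : ℝ → ℝ, IsKL β ∧ IsKInf γu ∧ IsKInf γb ∧
      ∀ br : ∀ i : ℕ, Fin (n i) → ℝ,
        ∀ xbar : ∀ i : ℕ, Fin (n i) → ℝ, (∀ i < M, ‖xbar i‖ ≤ lam i) →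
          ∀ u : ℕ → Fin nu → ℝ, (∀ t, ‖u t‖ ≤ 1) →
            ∀ x : ℕ → ∀ i : ℕ, Fin (n i) → ℝ, x 0 = xbar →
              (∀ k, 0 < M → x (k + 1) 0 =
                gruStep (Wz 0) (Wf 0) (Wr 0) (Uz 0) (Uf 0) (Ur 0) (bz 0) (bf 0) (br 0)
                  (u k) (x k 0)) →
              (∀ k, ∀ i : ℕ, i + 1 < M → x (k + 1) (i + 1) =
                gruStep (Wz (i + 1)) (Wf (i + 1)) (Wr (i + 1)) (Uz (i + 1)) (Uf (i + 1))
                  (Ur (i + 1)) (bz (i + 1)) (bf (i + 1)) (br (i + 1))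
                  (x (k + 1) i) (x k (i + 1))) →
              ∀ k : ℕ, (⨆ i : Fin M, ‖x k (i : ℕ)‖) ≤
                β (⨆ i : Fin M, ‖xbar (i : ℕ)‖) k + γu (⨆ t, ‖u t‖) +
                  γb (⨆ i : Fin M, ‖br (i : ℕ)‖) :=
  deep_gru_ISS_general Wz Wf Wr Uz Uf Ur bz bf lam hcond
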